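/- arXiv:0804.2809 — 2 statements merged into one kernel-verified Lean document; each statement's English description precedes it below -/
import Mathlib

section
/- Let (V,J,g) be as above with g a Norden metric (g(Jx,Jy) = -g(x,y)), dim V = 2n, and let F : V³ → ℝ be trilinear, symmetric in the last two arguments, with F(x,Jy,Jz) = F(x,y,z). If F satisfies both the W₁-condition (F is given by the Lie-form expression) and the W₃-condition (the cyclic sum of F(x,y,z) over x,y,z vanishes), and n ≥ 1, then F = 0. -/
/-- Pointwise statement that `W₁ ∩ W₃ = {F = 0}` in the Ganchev–Borisov
classification of almost complex manifolds with Norden metric, `dim V = 2n`,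
`n ≥ 1`. -/
theorem stmt_12 {V : Type*} [AddCommGroup V] [Module ℝ V] {n : ℕ} (hn : 1 ≤ n)
    (J : V →ₗ[ℝ] V) (hJ : ∀ x, J (J x) = -x)
    (g : V →ₗ[ℝ] V →ₗ[ℝ] ℝ)
    (hgsym : ∀ x y, g x y = g y x)
    (hnondeg : ∀ x, (∀ y, g x y = 0) → x = 0)
    (hNorden : ∀ x y, g (J x) (J y) = -g x y)
    (F : V →ₗ[ℝ] V →ₗ[ℝ] V →ₗ[ℝ] ℝ)
    (hFsym : ∀ x y z, F x y z = F x z y)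
    (hFJ : ∀ x y z, F x (J y) (J z) = F x y z)
    (e : Module.Basis (Fin (2 * n)) ℝ V) (ε : Fin (2 * n) → ℝ)
    (hε : ∀ i, ε i = 1 ∨ ε i = -1)
    (horth : ∀ i j, g (e i) (e j) = if i = j then ε i else 0)
    (θ : V → ℝ)
    (hθ : ∀ z, θ z = ∑ i, ε i * F (e i) (e i) z)
    (hW₁ : ∀ x y z, F x y z =
      (1 / (2 * n : ℝ)) * (g x y * θ z + g x z * θ y
        + g x (J y) * θ (J z) + g x (J z) * θ (J y)))
    (hW₃ : ∀ x y z, F x y z + F y z x + F z x y = 0) :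
    ∀ x y z, F x y z = 0 := by
  classical
  -- a linear version of θ
  set Θ : V →ₗ[ℝ] ℝ := ∑ i, ε i • F (e i) (e i) with hΘdef
  have hΘ : ∀ z, θ z = Θ z := by
    intro z
    rw [hθ, hΘdef]
    simp [LinearMap.sum_apply, LinearMap.smul_apply, smul_eq_mul]
  have hsq : ∀ i, ε i * ε i = 1 := by
    intro i; rcases hε i with h | h <;> rw [h] <;> ring
  -- orthonormal expansion
  have hexpand : ∀ z : V, z = ∑ i, (ε i * g z (e i)) • e i := by
    intro z
    have h0 : ∀ j, g (z - ∑ i, (ε i * g z (e i)) • e i) (e j) = 0 := by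
      intro j
      have h1 : g (∑ i, (ε i * g z (e i)) • e i) (e j) = g z (e j) := by
        rw [map_sum]
        simp only [map_smul, LinearMap.smul_apply, LinearMap.sum_apply, smul_eq_mul, horth]
        rw [Finset.sum_eq_single j]
        · rw [if_pos rfl]
          calc ε j * g z (e j) * ε j = (ε j * ε j) * g z (e j) := by ring
            _ = g z (e j) := by rw [hsq j]; ring
        · intro b _ hb; rw [if_neg hb]; ring
        · intro h; exact absurd (Finset.mem_univ j) h
      rw [map_sub]
      simp only [LinearMap.sub_apply]
      rw [h1]; ring
    have hz : ∀ y, g (z - ∑ i, (ε i * g z (e i)) • e i) y = 0 := by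
      intro y
      conv_lhs => rw [← Module.Basis.sum_repr e y]
      rw [map_sum]
      simp only [map_smul, smul_eq_mul, h0]
      simp
    exact sub_eq_zero.mp (hnondeg _ hz)
  -- g z (J eᵢ) = g (J z) eᵢ
  have hgJ : ∀ (z : V) (w : V), g z (J w) = g (J z) w := by
    intro z w
    have h := hNorden (J z) w
    rw [hJ] at h
    have h2 : g (-z) (J w) = -(g z (J w)) := by rw [map_neg]; simp
    rw [h2] at h
    linarith [hgsym z (J w), hgsym (J z) w]
  -- key sum A
  have hA : ∀ z : V, ∑ i, ε i * g z (e i) * θ (e i) = θ z := by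
    intro z
    simp only [hΘ]
    conv_rhs => rw [hexpand z]
    rw [map_sum]
    apply Finset.sum_congr rfl
    intro i _
    rw [map_smul, smul_eq_mul]
  -- key sum B
  have hB : ∀ z : V, ∑ i, ε i * g z (J (e i)) * θ (J (e i)) = -θ z := by
    intro z
    simp only [hΘ, hgJ]
    have h1 : ∑ i, ε i * g (J z) (e i) * Θ (J (e i))
        = Θ (J (∑ i, (ε i * g (J z) (e i)) • e i)) := by
      rw [map_sum, map_sum]
      apply Finset.sum_congr rfl
      intro i _
      rw [map_smul, map_smul, smul_eq_mul]
    rw [h1, ← hexpand (J z), hJ, map_neg]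
  -- θ vanishes
  have hθ0 : ∀ z, θ z = 0 := by
    intro z
    have h1 : ∀ i, ε i * (2 * F (e i) (e i) z + F z (e i) (e i)) = 0 := by
      intro i
      have h := hW₃ (e i) (e i) z
      have hs := hFsym (e i) z (e i)
      have : 2 * F (e i) (e i) z + F z (e i) (e i) = 0 := by linarith
      rw [this]; ring
    have h2 : 2 * θ z + ∑ i, ε i * F z (e i) (e i) = 0 := by
      have h3 : ∑ i, ε i * (2 * F (e i) (e i) z + F z (e i) (e i)) = 0 :=
        Finset.sum_eq_zero fun i _ => h1 i
      have h4 : ∑ i, ε i * (2 * F (e i) (e i) z + F z (e i) (e i))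
          = 2 * (∑ i, ε i * F (e i) (e i) z) + ∑ i, ε i * F z (e i) (e i) := by
        rw [Finset.mul_sum, ← Finset.sum_add_distrib]
        apply Finset.sum_congr rfl
        intro i _; ring
      rw [h4] at h3
      rw [hθ z]
      linarith
    have h5 : ∑ i, ε i * F z (e i) (e i) = 0 := by
      have h6 : ∀ i, ε i * F z (e i) (e i)
          = (1 / (2 * n : ℝ)) * (2 * (ε i * g z (e i) * θ (e i))
              + 2 * (ε i * g z (J (e i)) * θ (J (e i)))) := by
        intro i
        rw [hW₁ z (e i) (e i)]
        ring
      calc ∑ i, ε i * F z (e i) (e i)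
          = (1 / (2 * n : ℝ)) * (2 * (∑ i, ε i * g z (e i) * θ (e i))
              + 2 * (∑ i, ε i * g z (J (e i)) * θ (J (e i)))) := by
            rw [Finset.mul_sum, Finset.mul_sum, ← Finset.sum_add_distrib, Finset.mul_sum]
            exact Finset.sum_congr rfl fun i _ => h6 i
        _ = 0 := by rw [hA z, hB z]; ring
    rw [h5] at h2
    linarith
  intro x y z
  rw [hW₁ x y z, hθ0, hθ0, hθ0, hθ0]
  ring
end

section
/- Given the components of F₃ on lifts: F₃(Xᴴ,Yᴴ,Zᴴ) = -F₃(Xᴴ,Yⱽ,Zⱽ) = -F(X,Y,Z), F₃(Xᴴ,Yᴴ,Zⱽ) = -½[R(X,JY,Z,u) + R(X,Y,JZ,u)], F₃(Xᴴ,Yⱽ,Zᴴ) = ½[R(Z,X,JY,u) + R(JZ,X,Y,u)], F₃(Xⱽ,Yᴴ,Zᴴ) = ½[R(JY,Z,X,u) - R(Y,JZ,X,u)], all other components zero, and the first Bianchi identity and standard symmetries of R: then the Lie form θ₃ evaluated on vertical lifts vanishes, i.e. θ₃(Zⱽ) = Σᵢ εᵢ [F₃(eᵢᴴ,eᵢᴴ,Zⱽ)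 + F₃(eᵢⱽ,eᵢⱽ,Zⱽ)] = 0 for any g-orthonormal basis {eᵢ} of V with Je-basis pairing. -/
/-- Given the component formulas of the structural tensor `F₃` of `(J₃, ĝ)` on
`TM` (horizontal lifts `(X,0)`, vertical lifts `(0,X)`, at `u ∈ TₚM`) in terms
of the base structural tensor `F` and curvature `(0,4)`-tensor `R`, the Lie
form `θ₃` evaluated on vertical lifts vanishes, for any adapted `g`-orthonormal
basis `{eᵢ, Jeᵢ}` of signature `(n,n)`. -/
theorem stmt_13 {V : Type*} [AddCommGroup V] [Module ℝ V] {n : ℕ}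
    (J : V →ₗ[ℝ] V) (hJ : ∀ x, J (J x) = -x)
    (g : V →ₗ[ℝ] V →ₗ[ℝ] ℝ)
    (hgsym : ∀ x y, g x y = g y x)
    (hNorden : ∀ x y, g (J x) (J y) = -g x y)
    (F : V → V → V → ℝ)                         -- structural tensor of the base
    (R : V →ₗ[ℝ] V →ₗ[ℝ] V →ₗ[ℝ] V →ₗ[ℝ] ℝ)    -- curvature (0,4)-tensor
    (hR₁ : ∀ X Y Z W, R X Y Z W = -R Y X Z W)
    (hR₂ : ∀ X Y Z W, R X Y Z W = -R X Y W Z)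
    (hBianchi : ∀ X Y Z W, R X Y Z W + R Y Z X W + R Z X Y W = 0)
    (F₃ : V → (V × V) → (V × V) → (V × V) → ℝ)
    (hHHH : ∀ u X Y Z : V, F₃ u (X, 0) (Y, 0) (Z, 0) = -F X Y Z)
    (hHVV : ∀ u X Y Z : V, F₃ u (X, 0) (0, Y) (0, Z) = F X Y Z)
    (hHHV : ∀ u X Y Z : V,
      F₃ u (X, 0) (Y, 0) (0, Z) = -(1/2) * (R X (J Y) Z u + R X Y (J Z) u))
    (hHVH : ∀ u X Y Z : V,
      F₃ u (X, 0) (0, Y) (Z, 0) = (1/2) * (R Z X (J Y) u + R (J Z) X Y u))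
    (hVHH : ∀ u X Y Z : V,
      F₃ u (0, X) (Y, 0) (Z, 0) = (1/2) * (R (J Y) Z X u - R Y (J Z) X u))
    (hVHV : ∀ u X Y Z : V, F₃ u (0, X) (Y, 0) (0, Z) = 0)
    (hVVH : ∀ u X Y Z : V, F₃ u (0, X) (0, Y) (Z, 0) = 0)
    (hVVV : ∀ u X Y Z : V, F₃ u (0, X) (0, Y) (0, Z) = 0)
    (e : Fin n ⊕ Fin n → V)
    (he : ∀ i, e (Sum.inr i) = J (e (Sum.inl i)))
    (ε : Fin n ⊕ Fin n → ℝ)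
    (hε : ε = Sum.elim (fun _ => (1 : ℝ)) (fun _ => (-1 : ℝ)))
    (horth : ∀ i j, g (e i) (e j) = if i = j then ε i else 0) :
    ∀ Z u : V,
      ∑ i, ε i * (F₃ u (e i, 0) (e i, 0) (0, Z) + F₃ u (0, e i) (0, e i) (0, Z)) = 0 := by
  intro Z u
  have hXX : ∀ X Y W, R X X Y W = 0 := fun X Y W => by linarith [hR₁ X X Y W]
  rw [Fintype.sum_sum_type]
  have h1 : ∀ i : Fin n,
      ε (Sum.inl i) * (F₃ u (e (Sum.inl i), 0) (e (Sum.inl i), 0) (0, Z)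
        + F₃ u (0, e (Sum.inl i)) (0, e (Sum.inl i)) (0, Z))
      = -(1/2) * R (e (Sum.inl i)) (J (e (Sum.inl i))) Z u := by
    intro i
    rw [hHHV, hVVV, hε]
    simp [hXX]
  have h2 : ∀ i : Fin n,
      ε (Sum.inr i) * (F₃ u (e (Sum.inr i), 0) (e (Sum.inr i), 0) (0, Z)
        + F₃ u (0, e (Sum.inr i)) (0, e (Sum.inr i)) (0, Z))
      = (1/2) * R (e (Sum.inl i)) (J (e (Sum.inl i))) Z u := by
    intro i
    rw [hHHV, hVVV, hε, he, hJ]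
    have := hR₁ (J (e (Sum.inl i))) (e (Sum.inl i)) Z u
    simp [hXX, map_neg]
    linarith
  simp only [h1, h2]
  rw [← Finset.sum_add_distrib]
  apply Finset.sum_eq_zero
  intro i _
  ring
end
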